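/- Let f ∈ L¹(Ω) and let p ≥ 0 be an integer. Then ∫_{−π}^{π} e^{imω} ( ∫_{−1}^{1} s^p Rf(s, e^{iω}) ds ) dω = 0 for every m ∈ ℤ such that either p − m is odd, or |m| > p and p − m is even. -/

import Mathlib

/-!
By Fubini's theorem and a rotation of the plane, `∫_{-1}^{1} s^p Rf(s, e^{iω}) ds` equals
`∫ ⟨z, e^{iω}⟩^p f(z) dz`. Since `⟨z, e^{iω}⟩ = (z e^{-iω} + z̄ e^{iω}) / 2`, the binomial theorem
makes this a trigonometric polynomial in `ω` with frequencies `p - 2k`, `0 ≤ k ≤ p`, whose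
coefficients are the complex moments `∫ z^k z̄^(p-k) f(z) dz`. Its `m`-th Fourier coefficient can
only be nonzero if `m = 2k - p` for some such `k`, which forces `p - m` even and `|m| ≤ p`.
-/

open MeasureTheory Filter Set

noncomputable section

/-- The point `e^{iω}` on the unit circle. -/
def circlePoint (ω : ℝ) : ℂ := Complex.exp (Complex.I * ω)

/-- The Radon transform `Rf(s, e^{iω}) = ∫_{-1}^{1} f(s e^{iω} + t e^{i(ω+π/2)}) dt`. -/
def radonT (f : ℂ → ℝ) (s ω : ℝ) : ℝ :=
  ∫ t in (-1 : ℝ)..1, f ((s : ℂ) * circlePoint ω + (t : ℂ) * circlePoint (ω + Real.pi / 2))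

open Complex ComplexConjugate

lemma circlePoint_eq_coe_circleExp (ω : ℝ) : circlePoint ω = Circle.exp ω := by
  rw [circlePoint, Circle.coe_exp, mul_comm]

lemma circlePoint_add_pi_div_two (ω : ℝ) :
    circlePoint (ω + Real.pi / 2) = I * circlePoint ω := by
  rw [circlePoint, circlePoint, ofReal_add, mul_add, exp_add, ofReal_div, ofReal_ofNat,
    mul_comm I (_ / 2), exp_pi_div_two_mul_I, mul_comm]

lemma conj_circlePoint_pow_mul_pow {k p : ℕ} (hk : k ≤ p) (ω : ℝ) :
    conj (circlePoint ω) ^ k * circlePoint ω ^ (p - k)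
      = exp (I * (((p : ℤ) - 2 * k : ℤ) : ℂ) * ω) := by
  rw [circlePoint, ← exp_conj, ← exp_nat_mul, ← exp_nat_mul, ← exp_add]
  congr 1
  simp only [map_mul, conj_I, conj_ofReal]
  push_cast [Nat.cast_sub hk]
  ring

lemma ofReal_re_pow_eq_sum (w : ℂ) (p : ℕ) :
    ((w.re ^ p : ℝ) : ℂ)
      = ∑ k ∈ Finset.range (p + 1), 2⁻¹ ^ p * p.choose k * (w ^ k * conj w ^ (p - k)) := by
  rw [ofReal_pow, re_eq_add_conj, div_eq_mul_inv, mul_pow, add_pow, Finset.sum_mul]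
  exact Finset.sum_congr rfl fun k _ => by ring

def rotatedCoords (u : Circle) : ℝ × ℝ ≃ᵐ ℂ :=
  measurableEquivRealProd.symm.trans (rotation u).toHomeomorph.toMeasurableEquiv

lemma rotatedCoords_apply (u : Circle) (q : ℝ × ℝ) :
    rotatedCoords u q = (q.1 + q.2 * I) * u := by
  simp [rotatedCoords, measurableEquivRealProd_symm_apply, mk_eq_add_mul_I, mul_comm]

lemma measurePreserving_rotatedCoords (u : Circle) :
    MeasurePreserving (rotatedCoords u) :=
  (rotation u).measurePreserving.comp volume_preserving_equiv_real_prod.symm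

lemma re_rotatedCoords_mul_conj (u : Circle) (q : ℝ × ℝ) :
    (rotatedCoords u q * conj (u : ℂ)).re = q.1 := by
  rw [rotatedCoords_apply, mul_assoc, ← Circle.coe_inv_eq_conj, ← Circle.coe_mul, mul_inv_cancel,
    Circle.coe_one, mul_one]
  simp

lemma norm_rotatedCoords (u : Circle) (q : ℝ × ℝ) :
    ‖rotatedCoords u q‖ = ‖(q.1 + q.2 * I : ℂ)‖ := by
  rw [rotatedCoords_apply, norm_mul, Circle.norm_coe, mul_one]

lemma one_le_abs_of_notMem_Ioc {x : ℝ} (hx : x ∉ Ioc (-1) 1) : 1 ≤ |x| :=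
  not_lt.1 fun h => hx ⟨(abs_lt.1 h).1, (abs_lt.1 h).2.le⟩

theorem MeasureTheory.Integrable.continuous_mul_of_support_subset {X R : Type*}
    [TopologicalSpace X] [T2Space X] [MeasurableSpace X] [OpensMeasurableSpace X] {μ : Measure X}
    [NormedRing R] [SecondCountableTopologyEither X R] {f g : X → R} {K : Set X}
    (hg : Continuous g) (hf : Integrable f μ) (hK : IsCompact K) (hfK : Function.support f ⊆ K) :
    Integrable (fun x => g x * f x) μ :=
  (integrableOn_iff_integrable_of_support_subset
    ((Function.support_mul_subset_right g f).trans hfK)).1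
    (hf.integrableOn.continuousOn_mul hg.continuousOn hK)

lemma support_subset_closedBall_of_forall_one_le_norm {E M : Type*} [SeminormedAddCommGroup E]
    [Zero M] {f : E → M} (hsupp : ∀ z : E, 1 ≤ ‖z‖ → f z = 0) :
    Function.support f ⊆ Metric.closedBall 0 1 := fun z hz =>
  mem_closedBall_zero_iff.2 (not_le.1 fun h => hz (hsupp z h)).le

section SupportInDisc

variable {f : ℂ → ℝ} (hsupp : ∀ z : ℂ, 1 ≤ ‖z‖ → f z = 0)
include hsupp

lemma apply_rotatedCoords_eq_zero_of_one_le_abs_fst (u : Circle) {q : ℝ × ℝ} (hq : 1 ≤ |q.1|) :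
    f (rotatedCoords u q) = 0 :=
  hsupp _ <| hq.trans <| by simpa [norm_rotatedCoords] using abs_re_le_norm (q.1 + q.2 * I)

lemma apply_rotatedCoords_eq_zero_of_one_le_abs_snd (u : Circle) {q : ℝ × ℝ} (hq : 1 ≤ |q.2|) :
    f (rotatedCoords u q) = 0 :=
  hsupp _ <| hq.trans <| by simpa [norm_rotatedCoords] using abs_im_le_norm (q.1 + q.2 * I)

lemma radonT_eq_integral (s ω : ℝ) :
    radonT f s ω = ∫ t : ℝ, f (rotatedCoords (Circle.exp ω) (s, t)) := by
  have hpoint : ∀ t : ℝ, (s : ℂ) * circlePoint ω + t * circlePoint (ω + Real.pi / 2)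
      = rotatedCoords (Circle.exp ω) (s, t) := fun t => by
    rw [circlePoint_add_pi_div_two, rotatedCoords_apply, ← circlePoint_eq_coe_circleExp]
    ring
  simp_rw [radonT, hpoint, intervalIntegral.integral_of_le (show (-1 : ℝ) ≤ 1 by norm_num)]
  exact setIntegral_eq_integral_of_forall_compl_eq_zero fun t ht =>
    apply_rotatedCoords_eq_zero_of_one_le_abs_snd hsupp _ (q := (s, t))
      (one_le_abs_of_notMem_Ioc ht)

variable (hf : Integrable f)
include hf

theorem integral_mul_radonT {g : ℝ → ℝ} (hg : Continuous g) (ω : ℝ) :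
    ∫ s in (-1 : ℝ)..1, g s * radonT f s ω
      = ∫ z : ℂ, g (z * conj (circlePoint ω)).re * f z := by
  set u := Circle.exp ω
  set G : ℂ → ℝ := fun z => g (z * conj (u : ℂ)).re * f z
  have hGT : ∀ q, G (rotatedCoords u q) = g q.1 * f (rotatedCoords u q) := fun q => by
    simp only [G, re_rotatedCoords_mul_conj]
  have hG : Integrable G :=
    hf.continuous_mul_of_support_subset (by fun_prop) (isCompact_closedBall 0 1)
      (support_subset_closedBall_of_forall_one_le_norm hsupp)
  have hGT_int : Integrable (fun q => g q.1 * f (rotatedCoords u q)) (volume.prod volume) := by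
    rw [← Measure.volume_eq_prod]
    simpa only [Function.comp_def, hGT] using
      ((measurePreserving_rotatedCoords u).integrable_comp_emb
        (rotatedCoords u).measurableEmbedding).2 hG
  have hR : ∀ s, radonT f s ω = ∫ t : ℝ, f (rotatedCoords u (s, t)) :=
    fun s => radonT_eq_integral hsupp s ω
  calc ∫ s in (-1 : ℝ)..1, g s * radonT f s ω
      = ∫ s : ℝ, ∫ t : ℝ, g s * f (rotatedCoords u (s, t)) := by
        rw [intervalIntegral.integral_of_le (by norm_num)]
        refine (setIntegral_eq_integral_of_forall_compl_eq_zero fun s hs => ?_).trans ?_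
        · simp [hR, apply_rotatedCoords_eq_zero_of_one_le_abs_fst hsupp _ (q := (s, _))
            (one_le_abs_of_notMem_Ioc hs)]
        · simp_rw [hR, integral_const_mul]
    _ = ∫ q : ℝ × ℝ, g q.1 * f (rotatedCoords u q) := (integral_prod _ hGT_int).symm
    _ = ∫ z : ℂ, G z := by
        simp_rw [← hGT]
        exact (measurePreserving_rotatedCoords u).integral_comp' G
    _ = ∫ z : ℂ, g (z * conj (circlePoint ω)).re * f z := by
        rw [circlePoint_eq_coe_circleExp]

theorem integral_pow_mul_radonT_eq_sum (p : ℕ) (ω : ℝ) :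
    ∫ s in (-1 : ℝ)..1, (s : ℂ) ^ p * (radonT f s ω : ℂ)
      = ∑ k ∈ Finset.range (p + 1),
          (2⁻¹ ^ p * p.choose k * ∫ z : ℂ, z ^ k * conj z ^ (p - k) * f z)
            * exp (I * (((p : ℤ) - 2 * k : ℤ) : ℂ) * ω) := by
  have hmoment : ∀ k l : ℕ, Integrable fun z : ℂ => z ^ k * conj z ^ l * (f z : ℂ) := fun k l =>
    hf.ofReal.continuous_mul_of_support_subset (by fun_prop) (isCompact_closedBall 0 1)
      ((Function.support_comp_subset ofReal_zero _).trans
        (support_subset_closedBall_of_forall_one_le_norm hsupp))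
  calc ∫ s in (-1 : ℝ)..1, (s : ℂ) ^ p * (radonT f s ω : ℂ)
      = ((∫ s in (-1 : ℝ)..1, s ^ p * radonT f s ω : ℝ) : ℂ) := by
        rw [← intervalIntegral.integral_ofReal]
        push_cast
        rfl
    _ = ∫ z : ℂ, (((z * conj (circlePoint ω)).re ^ p * f z : ℝ) : ℂ) := by
        rw [integral_mul_radonT hsupp hf (continuous_pow p)]
        exact (integral_ofReal (𝕜 := ℂ)).symm
    _ = ∫ z : ℂ, ∑ k ∈ Finset.range (p + 1), (2⁻¹ ^ p * p.choose k
          * exp (I * (((p : ℤ) - 2 * k : ℤ) : ℂ) * ω)) * (z ^ k * conj z ^ (p - k) * f z) := by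
        congr 1 with z
        rw [ofReal_mul, ofReal_re_pow_eq_sum, Finset.sum_mul]
        refine Finset.sum_congr rfl fun k hk => ?_
        rw [← conj_circlePoint_pow_mul_pow (Nat.lt_succ_iff.1 (Finset.mem_range.1 hk))]
        simp only [map_mul, conj_conj, mul_pow]
        ring
    _ = _ := by
        rw [integral_finsetSum _ fun k _ => (hmoment _ _).const_mul _]
        refine Finset.sum_congr rfl fun k _ => ?_
        rw [integral_const_mul]
        ring

end SupportInDisc

lemma integral_exp_int_mul_eq_zero {n : ℤ} (hn : n ≠ 0) :
    ∫ ω in Ioc (-Real.pi) Real.pi, exp (I * n * ω) = 0 := by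
  have hperiod : exp (I * n * Real.pi) = exp (I * n * (-Real.pi : ℝ)) := by
    rw [show I * n * (Real.pi : ℂ) = I * n * (-Real.pi : ℝ) + n * (2 * Real.pi * I) by
      push_cast; ring, exp_add, exp_int_mul_two_pi_mul_I, mul_one]
  rw [← intervalIntegral.integral_of_le (by linarith [Real.pi_pos]),
    integral_exp_mul_complex (mul_ne_zero I_ne_zero (Int.cast_ne_zero.2 hn)), hperiod, sub_self,
    zero_div]

lemma integral_exp_mul_sum_exp_eq_zero {ι : Type*} (s : Finset ι) (a : ι → ℂ) (n : ι → ℤ)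
    {m : ℤ} (h : ∀ k ∈ s, m + n k ≠ 0) :
    ∫ ω in Ioc (-Real.pi) Real.pi, exp (I * m * ω) * ∑ k ∈ s, a k * exp (I * (n k : ℂ) * ω)
      = 0 := by
  have hterm : ∀ k (ω : ℝ), exp (I * m * ω) * (a k * exp (I * (n k : ℂ) * ω))
      = a k * exp (I * ((m + n k : ℤ) : ℂ) * ω) := fun k ω => by
    rw [mul_left_comm, ← exp_add]
    push_cast
    ring_nf
  simp_rw [Finset.mul_sum, hterm]
  rw [integral_finsetSum _ fun k _ => (by fun_prop : Continuous _).integrableOn_Ioc]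
  exact Finset.sum_eq_zero fun k hk => by
    rw [integral_const_mul, integral_exp_int_mul_eq_zero (h k hk), mul_zero]

lemma add_sub_two_mul_ne_zero {p k : ℕ} {m : ℤ} (hk : k ≤ p)
    (hm : Odd ((p : ℤ) - m) ∨ (p : ℤ) < |m|) : m + ((p : ℤ) - 2 * k) ≠ 0 := by
  intro h
  rcases hm with ⟨j, hj⟩ | hlt
  · omega
  · rcases lt_abs.1 hlt with hlt | hlt <;> omega

/-- Gelfand–Graev–Helgason–Ludwig moment conditions (Proposition 6.1). -/
theorem stmt6 (f : ℂ → ℝ) (hf : Integrable f)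
    (hsupp : ∀ z : ℂ, 1 ≤ ‖z‖ → f z = 0)
    (p : ℕ) (m : ℤ)
    (hm : Odd ((p : ℤ) - m) ∨ ((p : ℤ) < |m| ∧ Even ((p : ℤ) - m))) :
    ∫ ω in Ioc (-Real.pi) Real.pi,
      Complex.exp (Complex.I * (m : ℂ) * (ω : ℂ)) *
        ∫ s in (-1 : ℝ)..1, (s : ℂ) ^ p * (radonT f s ω : ℂ) = 0 := by
  simp_rw [integral_pow_mul_radonT_eq_sum hsupp hf p]
  refine integral_exp_mul_sum_exp_eq_zero _ _ _ fun k hk => ?_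
  exact add_sub_two_mul_ne_zero (Nat.lt_succ_iff.1 (Finset.mem_range.1 hk)) (hm.imp_right And.left)
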